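/- Let G₁ and G₂ be connected finite simple graphs with m and n vertices respectively that are relatively prime with respect to the box product. Then the number of simple graphs on the fixed vertex set {1,2,…,mn} that are isomorphic to G₁ □ G₂ equals (mn)! / (|Aut(G₁)| · |Aut(G₂)|). -/

import Mathlib

open SimpleGraph

/-- Two graphs are relatively prime with respect to the box product if any
common box-product factor is a single vertex. -/
def SimpleGraph.RelPrime {V₁ V₂ : Type} [Fintype V₁] [Fintype V₂]
    (G : SimpleGraph V₁) (H : SimpleGraph V₂) : Prop :=
  ∀ (A B C : Type) [Fintype A] [Fintype B] [Fintype C]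
    (G₁ : SimpleGraph A) (H₁ : SimpleGraph B) (J : SimpleGraph C),
    Nonempty (G ≃g G₁.boxProd J) → Nonempty (H ≃g H₁.boxProd J) →
    Fintype.card C = 1

/-!
Labelled copies of `X` on `Fin N` form an orbit of `Perm (Fin N)`, whose stabilizer is `Aut X`;
so it suffices that `Aut (G₁ □ G₂) ≅ Aut G₁ × Aut G₂`.

Layers of `G □ H` are geodesically convex, and for connected factors every convex set is a
product `A × B`. An automorphism `φ` therefore maps the `G`-layer through `b` onto some `A × B`,
whence `G ≅ G[A] □ H[B]`; and `φ⁻¹` maps the `H`-layer through a point `c ∈ A` onto a product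
containing `φ⁻¹ ({c} × B) = A' × {b}`, whence `H ≅ G[A'] □ H[B'] ≅ H[B'] □ H[B]`. Relative
primality forces `B` to be a single vertex, so `φ` maps layers to layers and splits as
`(g, h) ↦ (σ g, τ h)`.
-/

namespace SimpleGraph

open Set

variable {V W α β α' β' : Type*}

section Metric

variable {G : SimpleGraph V} {G' : SimpleGraph W}

lemma Hom.edist_map_le (f : G →g G') (u v : V) : G'.edist (f u) (f v) ≤ G.edist u v := by
  by_cases h : G.Reachable u v
  · obtain ⟨p, hp⟩ := h.exists_walk_length_eq_edist
    simpa [hp] using edist_le (p.map f)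
  · simp [edist_eq_top_of_not_reachable h]

lemma Iso.edist_map (f : G ≃g G') (u v : V) : G'.edist (f u) (f v) = G.edist u v :=
  le_antisymm (f.toHom.edist_map_le u v) (by simpa using f.symm.toHom.edist_map_le (f u) (f v))

lemma Iso.dist_map (f : G ≃g G') (u v : V) : G'.dist (f u) (f v) = G.dist u v := by
  simp only [dist, f.edist_map]

lemma dist_boxProd {G : SimpleGraph α} {H : SimpleGraph β} (hG : G.Connected) (hH : H.Connected)
    (x y : α × β) : (G □ H).dist x y = G.dist x.1 y.1 + H.dist x.2 y.2 := by
  have h := edist_boxProd (G := G) (H := H) x y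
  rw [← ((hG.boxProd hH) x y).coe_dist_eq_edist, ← (hG x.1 y.1).coe_dist_eq_edist,
    ← (hH x.2 y.2).coe_dist_eq_edist] at h
  exact_mod_cast h

end Metric

/-- Geodesic convexity. Only meaningful for connected `G`: `dist` is `0` between components. -/
def IsConvex (G : SimpleGraph V) (s : Set V) : Prop :=
  ∀ ⦃u v x⦄, u ∈ s → v ∈ s → G.dist u x + G.dist x v = G.dist u v → x ∈ s

section Convex

variable {G : SimpleGraph α} {H : SimpleGraph β}

lemma isConvex_univ : G.IsConvex univ := fun _ _ _ _ _ _ ↦ trivial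

lemma Connected.isConvex_singleton (hG : G.Connected) (a : α) : G.IsConvex {a} := by
  rintro _ _ x rfl rfl h
  rw [dist_self, Nat.add_eq_zero_iff, hG.dist_eq_zero_iff] at h
  exact h.1.symm

lemma IsConvex.image_iso {G' : SimpleGraph W} {s : Set α} (hs : G.IsConvex s) (f : G ≃g G') :
    G'.IsConvex (f '' s) := by
  rintro _ _ x ⟨u, hu, rfl⟩ ⟨v, hv, rfl⟩ h
  refine ⟨f.symm x, hs hu hv ?_, f.apply_symm_apply x⟩
  rwa [← f.dist_map, ← f.dist_map _ v, f.apply_symm_apply, ← f.dist_map]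

lemma IsConvex.prod (hG : G.Connected) (hH : H.Connected) {s : Set α} {t : Set β}
    (hs : G.IsConvex s) (ht : H.IsConvex t) : (G □ H).IsConvex (s ×ˢ t) := by
  rintro u v x ⟨hu₁, hu₂⟩ ⟨hv₁, hv₂⟩ h
  simp only [dist_boxProd hG hH] at h
  have := hG.dist_triangle (u := u.1) (v := x.1) (w := v.1)
  have := hH.dist_triangle (u := u.2) (v := x.2) (w := v.2)
  exact ⟨hs hu₁ hv₁ (by omega), ht hu₂ hv₂ (by omega)⟩

lemma IsConvex.fst_image_prod_snd_image (hG : G.Connected) (hH : H.Connected)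
    {s : Set (α × β)} (hs : (G □ H).IsConvex s) : (Prod.fst '' s) ×ˢ (Prod.snd '' s) = s := by
  refine (subset_antisymm ?_ fun p hp ↦ ⟨mem_image_of_mem _ hp, mem_image_of_mem _ hp⟩)
  rintro ⟨a, d⟩ ⟨⟨u, hu, rfl⟩, ⟨v, hv, rfl⟩⟩
  refine hs hu hv ?_
  simp only [dist_boxProd hG hH, dist_self]
  omega

end Convex

section InducedIso

variable {G : SimpleGraph α} {H : SimpleGraph β}

variable (G H) in
def induceProdIso (s : Set α) (t : Set β) :
    (G □ H).induce (s ×ˢ t) ≃g G.induce s □ H.induce t where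
  toFun p := (⟨p.1.1, p.2.1⟩, ⟨p.1.2, p.2.2⟩)
  invFun q := ⟨(q.1, q.2), q.1.2, q.2.2⟩
  left_inv _ := rfl
  right_inv _ := rfl
  map_rel_iff' := by simp [boxProd_adj, Subtype.ext_iff]

variable (G H) in
def induceProdSingletonIso (s : Set α) (b : β) : (G □ H).induce (s ×ˢ {b}) ≃g G.induce s where
  toFun p := ⟨p.1.1, p.2.1⟩
  invFun a := ⟨(a, b), a.2, rfl⟩
  left_inv := by rintro ⟨⟨a, _⟩, _, rfl⟩; rfl
  right_inv _ := rfl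
  map_rel_iff' := by
    rintro ⟨⟨a, b₁⟩, -, hb₁ : b₁ = b⟩ ⟨⟨a', b₂⟩, -, hb₂ : b₂ = b⟩
    simp [hb₁, hb₂, boxProd_adj]

variable (G H) in
def induceSingletonProdIso (a : α) (t : Set β) : (G □ H).induce ({a} ×ˢ t) ≃g H.induce t where
  toFun p := ⟨p.1.2, p.2.2⟩
  invFun b := ⟨(a, b), rfl, b.2⟩
  left_inv := by rintro ⟨⟨_, b⟩, rfl, _⟩; rfl
  right_inv _ := rfl
  map_rel_iff' := by
    rintro ⟨⟨a₁, b⟩, ha₁ : a₁ = a, -⟩ ⟨⟨a₂, b'⟩, ha₂ : a₂ = a, -⟩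
    simp [ha₁, ha₂, boxProd_adj]

def Iso.induceImage {G' : SimpleGraph W} (f : G ≃g G') (s : Set α) :
    G.induce s ≃g G'.induce (f '' s) :=
  f.induce f.injective.injOn.bijOn_image

def Iso.boxProdCongr {G' : SimpleGraph α'} {H' : SimpleGraph β'} (e₁ : G ≃g G') (e₂ : H ≃g H') :
    (G □ H) ≃g (G' □ H') where
  toEquiv := e₁.toEquiv.prodCongr e₂.toEquiv
  map_rel_iff' := by simp [boxProd_adj, Iso.map_adj_iff]

lemma IsConvex.nonempty_induce_iso_boxProd (hG : G.Connected) (hH : H.Connected)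
    {s : Set (α × β)} (hs : (G □ H).IsConvex s) :
    Nonempty ((G □ H).induce s ≃g G.induce (Prod.fst '' s) □ H.induce (Prod.snd '' s)) := by
  have e := induceProdIso G H (Prod.fst '' s) (Prod.snd '' s)
  rw [hs.fst_image_prod_snd_image hG hH] at e
  exact ⟨e⟩

end InducedIso

section Automorphisms

variable {G : SimpleGraph α} {H : SimpleGraph β}

lemma Iso.nonempty_iso_boxProd_image_row (hG : G.Connected) (hH : H.Connected)
    (φ : (G □ H) ≃g (G □ H)) (b : β) :
    Nonempty (G ≃g G.induce (Prod.fst '' (φ '' (univ ×ˢ {b}))) □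
      H.induce (Prod.snd '' (φ '' (univ ×ˢ {b})))) := by
  obtain ⟨e⟩ := ((isConvex_univ.prod hG hH (hH.isConvex_singleton b)).image_iso φ
    ).nonempty_induce_iso_boxProd hG hH
  exact ⟨G.induceUnivIso.symm.trans
    ((induceProdSingletonIso G H univ b).symm.trans ((φ.induceImage _).trans e))⟩

lemma Iso.nonempty_iso_boxProd_image_col (hG : G.Connected) (hH : H.Connected)
    (φ : (G □ H) ≃g (G □ H)) (a : α) :
    Nonempty (H ≃g G.induce (Prod.fst '' (φ '' ({a} ×ˢ univ))) □
      H.induce (Prod.snd '' (φ '' ({a} ×ˢ univ)))) := by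
  obtain ⟨e⟩ := (((hG.isConvex_singleton a).prod hG hH isConvex_univ).image_iso φ
    ).nonempty_induce_iso_boxProd hG hH
  exact ⟨H.induceUnivIso.symm.trans
    ((induceSingletonProdIso G H a univ).symm.trans ((φ.induceImage _).trans e))⟩

lemma Iso.nonempty_iso_induce_snd_image_row (hG : G.Connected) (hH : H.Connected)
    (φ : (G □ H) ≃g (G □ H)) (g : α) (b : β) :
    Nonempty (H.induce (Prod.snd '' (φ '' (univ ×ˢ {b}))) ≃g
      G.induce (Prod.fst '' (φ.symm '' ({(φ (g, b)).1} ×ˢ univ)))) := by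
  set S := φ '' (univ ×ˢ {b}) with hS_def
  set c := (φ (g, b)).1
  set T := φ.symm '' ({c} ×ˢ univ)
  have hS : (Prod.fst '' S) ×ˢ (Prod.snd '' S) = S :=
    ((isConvex_univ.prod hG hH (hH.isConvex_singleton b)).image_iso φ
      ).fst_image_prod_snd_image hG hH
  have hT : (Prod.fst '' T) ×ˢ (Prod.snd '' T) = T :=
    (((hG.isConvex_singleton c).prod hG hH isConvex_univ).image_iso φ.symm
      ).fst_image_prod_snd_image hG hH
  have hcS : c ∈ Prod.fst '' S := mem_image_of_mem _ (mem_image_of_mem φ ⟨mem_univ g, rfl⟩)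
  have hbT : b ∈ Prod.snd '' T :=
    ⟨(g, b), ⟨φ (g, b), ⟨rfl, mem_univ _⟩, φ.symm_apply_apply _⟩, rfl⟩
  have hcol : {c} ×ˢ univ ∩ S = {c} ×ˢ (Prod.snd '' S) := by
    conv_lhs => rw [← hS]
    rw [prod_inter_prod, singleton_inter_of_mem hcS, univ_inter]
  have hrow : T ∩ univ ×ˢ {b} = (Prod.fst '' T) ×ˢ {b} := by
    conv_lhs => rw [← hT]
    rw [prod_inter_prod, inter_univ, inter_singleton_of_mem hbT]
  have himage : φ.symm '' ({c} ×ˢ univ ∩ S) = T ∩ univ ×ˢ {b} := by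
    simp [T, hS_def, image_inter φ.symm.injective, image_image]
  rw [hcol, hrow] at himage
  have e := φ.symm.induceImage ({c} ×ˢ (Prod.snd '' S))
  rw [himage] at e
  exact ⟨(induceSingletonProdIso G H c _).symm.trans (e.trans (induceProdSingletonIso G H _ b))⟩

end Automorphisms

section BoxProdCongr

variable {G : SimpleGraph α} {H : SimpleGraph β} {G' : SimpleGraph α'} {H' : SimpleGraph β'}

lemma Iso.boxProdCongr_injective [Nonempty α] [Nonempty β] :
    Function.Injective fun e : (G ≃g G') × (H ≃g H') ↦ e.1.boxProdCongr e.2 := by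
  obtain ⟨a⟩ := ‹Nonempty α›
  obtain ⟨b⟩ := ‹Nonempty β›
  rintro ⟨e₁, e₂⟩ ⟨f₁, f₂⟩ h
  have h' := RelIso.ext_iff.mp h
  exact Prod.ext (RelIso.ext fun x ↦ congrArg Prod.fst (h' (x, b)))
    (RelIso.ext fun y ↦ congrArg Prod.snd (h' (a, y)))

lemma Iso.exists_boxProdCongr_eq_of_eq_prodMap [Nonempty α] [Nonempty β]
    (φ : (G □ H) ≃g (G' □ H')) {σ : α → α'} {τ : β → β'} (h : ⇑φ = Prod.map σ τ) :
    ∃ (e₁ : G ≃g G') (e₂ : H ≃g H'), e₁.boxProdCongr e₂ = φ := by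
  obtain ⟨hσ, hτ⟩ := Prod.map_bijective.mp (h ▸ φ.bijective)
  obtain ⟨a⟩ := ‹Nonempty α›
  obtain ⟨b⟩ := ‹Nonempty β›
  refine ⟨⟨Equiv.ofBijective σ hσ, fun {a₁ a₂} ↦ ?_⟩, ⟨Equiv.ofBijective τ hτ, fun {b₁ b₂} ↦ ?_⟩,
    RelIso.ext fun p ↦ (congrFun h p).symm⟩
  · simpa [h, boxProd_adj] using φ.map_adj_iff (v := (a₁, b)) (w := (a₂, b))
  · simpa [h, boxProd_adj] using φ.map_adj_iff (v := (a, b₁)) (w := (a, b₂))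

end BoxProdCongr

section RelPrime

variable {α β : Type} [Fintype α] [Fintype β] {G : SimpleGraph α} {H : SimpleGraph β}

lemma RelPrime.symm (h : G.RelPrime H) : H.RelPrime G :=
  fun A B C _ _ _ G₁ H₁ J hH hG ↦ h B A C H₁ G₁ J hG hH

lemma Iso.snd_apply_eq_of_relPrime (hG : G.Connected) (hH : H.Connected) (hGH : G.RelPrime H)
    (φ : (G □ H) ≃g (G □ H)) (g g' : α) (b : β) : (φ (g, b)).2 = (φ (g', b)).2 := by
  classical
  obtain ⟨eG⟩ := φ.nonempty_iso_boxProd_image_row hG hH b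
  obtain ⟨eH⟩ := φ.symm.nonempty_iso_boxProd_image_col hG hH (φ (g, b)).1
  obtain ⟨eJ⟩ := φ.nonempty_iso_induce_snd_image_row hG hH g b
  have hJ := hGH _ _ _ _ _ _ ⟨eG⟩
    ⟨eH.trans ((eJ.symm.boxProdCongr .refl).trans (boxProdComm _ _))⟩
  have hmem (x : α) : (φ (x, b)).2 ∈ Prod.snd '' (φ '' (univ ×ˢ {b})) :=
    mem_image_of_mem _ (mem_image_of_mem φ ⟨mem_univ x, rfl⟩)
  exact congrArg Subtype.val (Fintype.card_le_one_iff.mp hJ.le ⟨_, hmem g⟩ ⟨_, hmem g'⟩)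

lemma Iso.fst_apply_eq_of_relPrime (hG : G.Connected) (hH : H.Connected) (hGH : G.RelPrime H)
    (φ : (G □ H) ≃g (G □ H)) (a : α) (h h' : β) : (φ (a, h)).1 = (φ (a, h')).1 :=
  Iso.snd_apply_eq_of_relPrime hH hG hGH.symm
    ((boxProdComm H G).trans (φ.trans (boxProdComm G H))) h h' a

lemma Iso.exists_eq_prodMap_of_relPrime (hG : G.Connected) (hH : H.Connected)
    (hGH : G.RelPrime H) (φ : (G □ H) ≃g (G □ H)) : ∃ σ τ, ⇑φ = Prod.map σ τ := by
  obtain ⟨a⟩ := hG.nonempty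
  obtain ⟨b⟩ := hH.nonempty
  refine ⟨fun g ↦ (φ (g, b)).1, fun h ↦ (φ (a, h)).2, funext fun ⟨g, h⟩ ↦ Prod.ext ?_ ?_⟩
  · exact φ.fst_apply_eq_of_relPrime hG hH hGH g h b
  · exact φ.snd_apply_eq_of_relPrime hG hH hGH g a h

lemma card_aut_boxProd (hG : G.Connected) (hH : H.Connected) (hGH : G.RelPrime H) :
    Nat.card ((G □ H) ≃g (G □ H)) = Nat.card (G ≃g G) * Nat.card (H ≃g H) := by
  have := hG.nonempty
  have := hH.nonempty
  rw [← Nat.card_prod]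
  refine (Nat.card_eq_of_bijective _ ⟨Iso.boxProdCongr_injective, fun φ ↦ ?_⟩).symm
  obtain ⟨σ, τ, h⟩ := φ.exists_eq_prodMap_of_relPrime hG hH hGH
  obtain ⟨e₁, e₂, he⟩ := φ.exists_boxProdCongr_eq_of_eq_prodMap h
  exact ⟨(e₁, e₂), he⟩

end RelPrime

section Count

instance : MulAction (Equiv.Perm V) (SimpleGraph V) where
  smul σ G := G.comap σ.symm
  one_smul _ := rfl
  mul_smul _ _ _ := rfl

lemma perm_smul_adj (σ : Equiv.Perm V) (G : SimpleGraph V) (u v : V) :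
    (σ • G).Adj u v ↔ G.Adj (σ⁻¹ u) (σ⁻¹ v) :=
  Iff.rfl

lemma mem_orbit_perm_iff {X Y : SimpleGraph V} :
    Y ∈ MulAction.orbit (Equiv.Perm V) X ↔ Nonempty (Y ≃g X) := by
  constructor
  · rintro ⟨σ, rfl⟩
    exact ⟨Iso.comap σ.symm X⟩
  · rintro ⟨f⟩
    refine ⟨f.toEquiv.symm, ?_⟩
    ext u v
    simpa [perm_smul_adj] using f.map_adj_iff (v := u) (w := v)

lemma mem_stabilizer_perm_iff {X : SimpleGraph V} {σ : Equiv.Perm V} :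
    σ ∈ MulAction.stabilizer (Equiv.Perm V) X ↔ ∀ u v, X.Adj (σ u) (σ v) ↔ X.Adj u v := by
  rw [MulAction.mem_stabilizer_iff]
  constructor
  · intro h u v
    conv_lhs => rw [← h]
    simp [perm_smul_adj]
  · intro h
    ext u v
    simpa [perm_smul_adj] using (h (σ⁻¹ u) (σ⁻¹ v)).symm

def stabilizerEquivAut (X : SimpleGraph V) :
    MulAction.stabilizer (Equiv.Perm V) X ≃ (X ≃g X) where
  toFun σ := ⟨σ.1, mem_stabilizer_perm_iff.mp σ.2 _ _⟩
  invFun f := ⟨f.toEquiv, mem_stabilizer_perm_iff.mpr fun _ _ ↦ f.map_adj_iff⟩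
  left_inv _ := rfl
  right_inv _ := rfl

lemma card_nonempty_iso_mul_card_aut [Finite V] (X : SimpleGraph V) :
    Nat.card {Y : SimpleGraph V // Nonempty (Y ≃g X)} * Nat.card (X ≃g X) =
      (Nat.card V).factorial := by
  have hcopies : Nat.card {Y : SimpleGraph V // Nonempty (Y ≃g X)} =
      (MulAction.stabilizer (Equiv.Perm V) X).index := by
    rw [MulAction.index_stabilizer, ← Nat.card_coe_set_eq]
    exact Nat.card_congr (Equiv.subtypeEquivRight fun _ ↦ mem_orbit_perm_iff.symm)
  rw [hcopies, ← Nat.card_congr (stabilizerEquivAut X), mul_comm, Subgroup.card_mul_index,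
    Nat.card_perm]

lemma card_nonempty_iso_mul_card_aut_of_equiv [Finite V] (X : SimpleGraph W) (e : V ≃ W) :
    Nat.card {Y : SimpleGraph V // Nonempty (Y ≃g X)} * Nat.card (X ≃g X) =
      (Nat.card V).factorial := by
  let i : X.comap e ≃g X := Iso.comap e X
  have hcopies : {Y : SimpleGraph V // Nonempty (Y ≃g X)} ≃
      {Y : SimpleGraph V // Nonempty (Y ≃g X.comap e)} :=
    Equiv.subtypeEquivRight fun _ ↦ ⟨fun ⟨f⟩ ↦ ⟨f.trans i.symm⟩, fun ⟨f⟩ ↦ ⟨f.trans i⟩⟩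
  rw [Nat.card_congr hcopies, ← Nat.card_congr (RelIso.relIsoCongr i i),
    card_nonempty_iso_mul_card_aut]

end Count

end SimpleGraph

/-- Let `G₁` and `G₂` be connected finite simple graphs on `m` and `n` vertices,
relatively prime with respect to the box product.  The number of simple graphs
on the fixed vertex set `{1, …, mn}` isomorphic to `G₁ □ G₂` equals
`(mn)! / (|Aut(G₁)| ⬝ |Aut(G₂)|)`. -/
theorem card_labeled_copies_boxProd {V₁ V₂ : Type} [Fintype V₁] [Fintype V₂]
    (G₁ : SimpleGraph V₁) (G₂ : SimpleGraph V₂) (m n : ℕ)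
    (hm : Fintype.card V₁ = m) (hn : Fintype.card V₂ = n)
    (h₁ : G₁.Connected) (h₂ : G₂.Connected) (h : G₁.RelPrime G₂) :
    Nat.card {H : SimpleGraph (Fin (m * n)) // Nonempty (H ≃g G₁.boxProd G₂)} =
      (m * n).factorial / (Nat.card (G₁ ≃g G₁) * Nat.card (G₂ ≃g G₂)) := by
  subst hm hn
  have hcount := card_nonempty_iso_mul_card_aut_of_equiv (G₁ □ G₂)
    (Fintype.equivFinOfCardEq (Fintype.card_prod V₁ V₂)).symm
  rw [Nat.card_fin, card_aut_boxProd h₁ h₂ h] at hcount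
  exact Nat.eq_div_of_mul_eq_left (right_ne_zero_of_mul (hcount ▸ Nat.factorial_ne_zero _)) hcount
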